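/- arXiv:2201.10774 — 2 statements merged into one kernel-verified Lean document; each statement's English description precedes it below -/
import Mathlib

section
/- Let $M \ge 2$, $\alpha \ge 0$, and $Z \in [1/M, (M-1)/M]$. With $k(z,\alpha) = \frac{z e^{\alpha}}{z e^{\alpha}+(1-z)}$, one has $\frac{M(e^{\alpha}-1)}{(M-1)e^{\alpha}+1} Z(1-Z) \le k(Z,\alpha) - Z \le \frac{M(e^{\alpha}-1)}{e^{\alpha}+(M-1)} Z(1-Z)$. -/
theorem bounds_on_k_sub_z (M : ℕ) (hM : 2 ≤ M) (α : ℝ) (hα : 0 ≤ α)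
    (Z : ℝ) (hZ1 : 1 / (M : ℝ) ≤ Z) (hZ2 : Z ≤ ((M : ℝ) - 1) / M) :
    (M : ℝ) * (Real.exp α - 1) / ((M - 1) * Real.exp α + 1) * (Z * (1 - Z)) ≤
        Z * Real.exp α / (Z * Real.exp α + (1 - Z)) - Z ∧
      Z * Real.exp α / (Z * Real.exp α + (1 - Z)) - Z ≤
        (M : ℝ) * (Real.exp α - 1) / (Real.exp α + (M - 1)) * (Z * (1 - Z)) := by
  set e := Real.exp α with he_def
  have he : 1 ≤ e := by
    rw [he_def]
    simpa using Real.one_le_exp hα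
  have hM2 : (2 : ℝ) ≤ (M : ℝ) := by exact_mod_cast hM
  have hMpos : (0 : ℝ) < (M : ℝ) := by linarith
  have hZ0 : 0 < Z := lt_of_lt_of_le (by positivity) hZ1
  have hZlt : Z < 1 := lt_of_le_of_lt hZ2 (by
    rw [div_lt_one hMpos]; linarith)
  have hMZ1 : 1 ≤ (M : ℝ) * Z := by
    have := (div_le_iff₀ hMpos).mp hZ1
    linarith
  have hMZ2 : (M : ℝ) * Z ≤ (M : ℝ) - 1 := by
    have h := (le_div_iff₀ hMpos).mp hZ2
    nlinarith [h]
  have hD : 0 < Z * e + (1 - Z) := by nlinarith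
  have hA : (0 : ℝ) < ((M : ℝ) - 1) * e + 1 := by nlinarith
  have hB : (0 : ℝ) < e + ((M : ℝ) - 1) := by nlinarith
  have key : Z * e / (Z * e + (1 - Z)) - Z = (e - 1) * (Z * (1 - Z)) / (Z * e + (1 - Z)) := by
    field_simp
    ring
  rw [key]
  constructor
  · rw [div_mul_eq_mul_div, div_le_div_iff₀ hA hD]
    nlinarith [mul_nonneg (sub_nonneg.mpr he) (mul_nonneg hZ0.le (sub_nonneg.mpr hZlt.le)),
      mul_nonneg (mul_nonneg (sub_nonneg.mpr he) (sub_nonneg.mpr hMZ2))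
        (mul_nonneg hZ0.le (sub_nonneg.mpr hZlt.le)),
      mul_nonneg (sub_nonneg.mpr he) (sub_nonneg.mpr hMZ2)]
  · rw [div_mul_eq_mul_div, div_le_div_iff₀ hD hB]
    nlinarith [mul_nonneg (mul_nonneg (sub_nonneg.mpr he) (sub_nonneg.mpr hMZ1))
        (mul_nonneg hZ0.le (sub_nonneg.mpr hZlt.le))]
end

section
/- (Comparison of two competition dynamics) Let $M \ge 2$ and let $Z_1, Z_2$ be random variables taking values in $\{1/M, \dots, (M-1)/M\}$, with $\mu_i = \mathbb{E}[Z_i]$ and $\mu_2 \ge \mu_1$. Set $C_{\mathrm{low}} = \frac{M(e^{\alpha}-1)}{(M-1)e^{\alpha}+1}$, $C_{\mathrm{upp}} = \frac{M(e^{\alpha}-1)}{e^{\alpha}+(M-1)}$, $C_1 = C_{\mathrm{low}}/C_{\mathrm{upp}}$, and $C_2 = -C_1 \mu_1(1-\mu_1) + \frac{\mu_2 - \mu_1}{C_{\mathrm{upp}}} + \mu_2(1-\mu_2)$. If $\alpha > 0$ and $\mathrm{Var}[Z_2] \ge C_1 \mathrm{Var}[Z_1] + C_2$, then $\mathbb{E}\left[\frac{Z_1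 e^{\alpha}}{Z_1 e^{\alpha}+(1-Z_1)}\right] \ge \mathbb{E}\left[\frac{Z_2 e^{\alpha}}{Z_2 e^{\alpha}+(1-Z_2)}\right]$. -/
/-! Write `k(z) = z e^α / (z e^α + (1 - z))`. Then
`k(z) - z = (e^α - 1) z (1 - z) / (1 + (e^α - 1) z)`, and on the grid `1/M ≤ z ≤ 1 - 1/M` the
denominator lies between `(e^α + M - 1)/M` and `((M - 1) e^α + 1)/M`, which gives
`C_low z(1-z) ≤ k(z) - z ≤ C_upp z(1-z)`. Taking expectations and using
`E[Z(1-Z)] = μ(1-μ) - Var Z` bounds `E[k(Z₁)]` from below and `E[k(Z₂)]` from above; the variance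
hypothesis, multiplied by `C_upp`, says exactly that the lower bound dominates the upper one. -/

open MeasureTheory ProbabilityTheory Set

lemma div_add_one_sub_sub_self {z E : ℝ} (hD : z * E + (1 - z) ≠ 0) :
    z * E / (z * E + (1 - z)) - z = (E - 1) * (z * (1 - z)) / (z * E + (1 - z)) := by
  field_simp
  ring

section GridBounds

variable {M E z : ℝ}

lemma mul_one_sub_nonneg_of_mem_Icc (hM : 0 < M) (hz : z ∈ Icc (1 / M) (1 - 1 / M)) :
    0 ≤ z * (1 - z) := by
  obtain ⟨hz₁, hz₂⟩ := hz
  have hM' : 0 < 1 / M := by positivity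
  exact mul_nonneg (by linarith) (by linarith)

lemma one_le_mul_and_mul_le_sub_one_of_mem_Icc (hM : 0 < M) (hz : z ∈ Icc (1 / M) (1 - 1 / M)) :
    1 ≤ M * z ∧ M * z ≤ M - 1 := by
  obtain ⟨hz₁, hz₂⟩ := hz
  constructor
  · rwa [div_le_iff₀' hM] at hz₁
  · rw [le_sub_iff_add_le, ← le_sub_iff_add_le', div_le_iff₀' hM, mul_sub, mul_one] at hz₂
    linarith

lemma mul_mul_one_sub_le_div_add_one_sub_sub_self (hM : 0 < M) (hE : 1 ≤ E)
    (hz : z ∈ Icc (1 / M) (1 - 1 / M)) :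
    M * (E - 1) / ((M - 1) * E + 1) * (z * (1 - z)) ≤ z * E / (z * E + (1 - z)) - z := by
  obtain ⟨hMz₁, hMz₂⟩ := one_le_mul_and_mul_le_sub_one_of_mem_Icc hM hz
  have hD : 0 < z * E + (1 - z) := by nlinarith
  have hs : 0 ≤ (E - 1) * (z * (1 - z)) :=
    mul_nonneg (by linarith) (mul_one_sub_nonneg_of_mem_Icc hM hz)
  have hMD : M * (z * E + (1 - z)) ≤ (M - 1) * E + 1 := by nlinarith
  rw [div_add_one_sub_sub_self hD.ne', div_mul_eq_mul_div, div_le_div_iff₀ (by nlinarith) hD]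
  nlinarith [mul_le_mul_of_nonneg_left hMD hs]

lemma div_add_one_sub_sub_self_le_mul_mul_one_sub (hM : 0 < M) (hE : 1 ≤ E)
    (hz : z ∈ Icc (1 / M) (1 - 1 / M)) :
    z * E / (z * E + (1 - z)) - z ≤ M * (E - 1) / (E + (M - 1)) * (z * (1 - z)) := by
  obtain ⟨hMz₁, hMz₂⟩ := one_le_mul_and_mul_le_sub_one_of_mem_Icc hM hz
  have hD : 0 < z * E + (1 - z) := by nlinarith
  have hs : 0 ≤ (E - 1) * (z * (1 - z)) :=
    mul_nonneg (by linarith) (mul_one_sub_nonneg_of_mem_Icc hM hz)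
  have hMD : E + (M - 1) ≤ M * (z * E + (1 - z)) := by nlinarith
  rw [div_add_one_sub_sub_self hD.ne', div_mul_eq_mul_div, div_le_div_iff₀ hD (by linarith)]
  nlinarith [mul_le_mul_of_nonneg_left hMD hs]

end GridBounds

lemma natCast_div_mem_Icc {M j : ℕ} (hj : 1 ≤ j) (hjM : j ≤ M - 1) :
    (j : ℝ) / M ∈ Icc (1 / (M : ℝ)) (1 - 1 / M) := by
  have hM : (0 : ℝ) < M := by exact_mod_cast (by omega : 0 < M)
  refine ⟨div_le_div_of_nonneg_right (by exact_mod_cast hj) hM.le, ?_⟩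
  rw [le_sub_iff_add_le, ← add_div, div_le_one hM]
  exact_mod_cast (by omega : j + 1 ≤ M)

lemma MeasureTheory.MemLp.integrable_mul_one_sub {Ω : Type*} [MeasurableSpace Ω] {μ : Measure Ω}
    [IsFiniteMeasure μ] {Z : Ω → ℝ} (hZ : MemLp Z 2 μ) :
    Integrable (fun ω => Z ω * (1 - Z ω)) μ :=
  ((hZ.integrable one_le_two).sub hZ.integrable_sq).congr
    (.of_forall fun ω => by simp only [Pi.sub_apply]; ring)

section Expectation

variable {Ω : Type*} [MeasurableSpace Ω] {μ : Measure Ω} [IsProbabilityMeasure μ] {Z f : Ω → ℝ}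

lemma integral_mul_one_sub_eq (hZ : MemLp Z 2 μ) :
    ∫ ω, Z ω * (1 - Z ω) ∂μ = (∫ ω, Z ω ∂μ) * (1 - ∫ ω, Z ω ∂μ) - variance Z μ := by
  have hsq := variance_eq_sub hZ
  simp only [Pi.pow_apply] at hsq
  have hsplit : ∫ ω, Z ω * (1 - Z ω) ∂μ = (∫ ω, Z ω ∂μ) - ∫ ω, Z ω ^ 2 ∂μ := by
    rw [← integral_sub (hZ.integrable one_le_two) hZ.integrable_sq]
    simp only [mul_sub, mul_one, sq]
  rw [hsplit, hsq]
  ring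

lemma integral_add_mul_mul_one_sub (hZ : MemLp Z 2 μ) (c : ℝ) :
    ∫ ω, (Z ω + c * (Z ω * (1 - Z ω))) ∂μ =
      (∫ ω, Z ω ∂μ) + c * ((∫ ω, Z ω ∂μ) * (1 - ∫ ω, Z ω ∂μ) - variance Z μ) := by
  rw [integral_add (hZ.integrable one_le_two) (hZ.integrable_mul_one_sub.const_mul c),
    integral_const_mul, integral_mul_one_sub_eq hZ]

lemma integrable_add_mul_mul_one_sub (hZ : MemLp Z 2 μ) (c : ℝ) :
    Integrable (fun ω => Z ω + c * (Z ω * (1 - Z ω))) μ :=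
  (hZ.integrable one_le_two).add (hZ.integrable_mul_one_sub.const_mul c)

lemma mean_add_mul_sub_variance_le_integral (hZ : MemLp Z 2 μ) (hf : Integrable f μ) (c : ℝ)
    (h : ∀ ω, c * (Z ω * (1 - Z ω)) ≤ f ω - Z ω) :
    (∫ ω, Z ω ∂μ) + c * ((∫ ω, Z ω ∂μ) * (1 - ∫ ω, Z ω ∂μ) - variance Z μ) ≤ ∫ ω, f ω ∂μ := by
  rw [← integral_add_mul_mul_one_sub hZ c]
  exact integral_mono (integrable_add_mul_mul_one_sub hZ c) hf fun ω => by linarith [h ω]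

lemma integral_le_mean_add_mul_sub_variance (hZ : MemLp Z 2 μ) (hf : Integrable f μ) (c : ℝ)
    (h : ∀ ω, f ω - Z ω ≤ c * (Z ω * (1 - Z ω))) :
    ∫ ω, f ω ∂μ ≤ (∫ ω, Z ω ∂μ) + c * ((∫ ω, Z ω ∂μ) * (1 - ∫ ω, Z ω ∂μ) - variance Z μ) := by
  rw [← integral_add_mul_mul_one_sub hZ c]
  exact integral_mono hf (integrable_add_mul_mul_one_sub hZ c) fun ω => by linarith [h ω]

end Expectation

theorem comparison_of_two_competition_dynamics_general {Ω : Type*} [MeasurableSpace Ω] (μ : MeasureTheory.Measure Ω)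
    [MeasureTheory.IsProbabilityMeasure μ] (M : ℕ) (hM : 2 ≤ M)
    (α : ℝ) (hα : 0 < α)
    (Z₁ Z₂ : Ω → ℝ)
    (hval₁ : ∀ ω, ∃ j : ℕ, 1 ≤ j ∧ j ≤ M - 1 ∧ Z₁ ω = (j : ℝ) / M)
    (hval₂ : ∀ ω, ∃ j : ℕ, 1 ≤ j ∧ j ≤ M - 1 ∧ Z₂ ω = (j : ℝ) / M)
    (hL₁ : MemLp Z₁ 2 μ) (hL₂ : MemLp Z₂ 2 μ)
    (hkint₁ : Integrable (fun ω => Z₁ ω * Real.exp α / (Z₁ ω * Real.exp α + (1 - Z₁ ω))) μ)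
    (hkint₂ : Integrable (fun ω => Z₂ ω * Real.exp α / (Z₂ ω * Real.exp α + (1 - Z₂ ω))) μ)
    (hvar : variance Z₂ μ ≥
      ((M : ℝ) * (Real.exp α - 1) / ((M - 1) * Real.exp α + 1)) /
          ((M : ℝ) * (Real.exp α - 1) / (Real.exp α + (M - 1))) * variance Z₁ μ +
        (-(((M : ℝ) * (Real.exp α - 1) / ((M - 1) * Real.exp α + 1)) /
              ((M : ℝ) * (Real.exp α - 1) / (Real.exp α + (M - 1)))) *
            ((∫ ω, Z₁ ω ∂μ) * (1 - ∫ ω, Z₁ ω ∂μ)) +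
          ((∫ ω, Z₂ ω ∂μ) - ∫ ω, Z₁ ω ∂μ) /
            ((M : ℝ) * (Real.exp α - 1) / (Real.exp α + (M - 1))) +
          (∫ ω, Z₂ ω ∂μ) * (1 - ∫ ω, Z₂ ω ∂μ))) :
    (∫ ω, Z₂ ω * Real.exp α / (Z₂ ω * Real.exp α + (1 - Z₂ ω)) ∂μ) ≤
      ∫ ω, Z₁ ω * Real.exp α / (Z₁ ω * Real.exp α + (1 - Z₁ ω)) ∂μ := by
  have hE : 1 < Real.exp α := Real.one_lt_exp_iff.2 hα
  have hM₀ : (0 : ℝ) < M := Nat.cast_pos.2 (by omega)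
  set E := Real.exp α
  set a := (M : ℝ) * (E - 1) / ((M - 1) * E + 1)
  set b := (M : ℝ) * (E - 1) / (E + (M - 1))
  have hb : 0 < b := div_pos (mul_pos hM₀ (by linarith)) (by linarith)
  have hgrid {Z : Ω → ℝ} (hval : ∀ ω, ∃ j : ℕ, 1 ≤ j ∧ j ≤ M - 1 ∧ Z ω = (j : ℝ) / M) (ω : Ω) :
      Z ω ∈ Icc (1 / (M : ℝ)) (1 - 1 / M) := by
    obtain ⟨j, hj, hjM, hZ⟩ := hval ω
    exact hZ ▸ natCast_div_mem_Icc hj hjM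
  have h₁ := mean_add_mul_sub_variance_le_integral hL₁ hkint₁ a fun ω =>
    mul_mul_one_sub_le_div_add_one_sub_sub_self hM₀ hE.le (hgrid hval₁ ω)
  have h₂ := integral_le_mean_add_mul_sub_variance hL₂ hkint₂ b fun ω =>
    div_add_one_sub_sub_self_le_mul_mul_one_sub hM₀ hE.le (hgrid hval₂ ω)
  set m₁ := ∫ ω, Z₁ ω ∂μ
  set m₂ := ∫ ω, Z₂ ω ∂μ
  have hexpand : b * (a / b * variance Z₁ μ + (-(a / b) * (m₁ * (1 - m₁)) + (m₂ - m₁) / b +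
      m₂ * (1 - m₂))) =
      a * variance Z₁ μ - a * (m₁ * (1 - m₁)) + (m₂ - m₁) + b * (m₂ * (1 - m₂)) := by
    field_simp
    ring
  linarith [mul_le_mul_of_nonneg_left hvar hb.le]

theorem comparison_of_two_competition_dynamics {Ω : Type*} [MeasurableSpace Ω] (μ : MeasureTheory.Measure Ω)
    [MeasureTheory.IsProbabilityMeasure μ] (M : ℕ) (hM : 2 ≤ M)
    (α : ℝ) (hα : 0 < α)
    (Z₁ Z₂ : Ω → ℝ)
    (hval₁ : ∀ ω, ∃ j : ℕ, 1 ≤ j ∧ j ≤ M - 1 ∧ Z₁ ω = (j : ℝ) / M)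
    (hval₂ : ∀ ω, ∃ j : ℕ, 1 ≤ j ∧ j ≤ M - 1 ∧ Z₂ ω = (j : ℝ) / M)
    (hint₁ : Integrable Z₁ μ) (hint₂ : Integrable Z₂ μ)
    (hL₁ : MemLp Z₁ 2 μ) (hL₂ : MemLp Z₂ 2 μ)
    (hkint₁ : Integrable (fun ω => Z₁ ω * Real.exp α / (Z₁ ω * Real.exp α + (1 - Z₁ ω))) μ)
    (hkint₂ : Integrable (fun ω => Z₂ ω * Real.exp α / (Z₂ ω * Real.exp α + (1 - Z₂ ω))) μ)
    (hμ : (∫ ω, Z₁ ω ∂μ) ≤ ∫ ω, Z₂ ω ∂μ)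
    (hvar : variance Z₂ μ ≥
      ((M : ℝ) * (Real.exp α - 1) / ((M - 1) * Real.exp α + 1)) /
          ((M : ℝ) * (Real.exp α - 1) / (Real.exp α + (M - 1))) * variance Z₁ μ +
        (-(((M : ℝ) * (Real.exp α - 1) / ((M - 1) * Real.exp α + 1)) /
              ((M : ℝ) * (Real.exp α - 1) / (Real.exp α + (M - 1)))) *
            ((∫ ω, Z₁ ω ∂μ) * (1 - ∫ ω, Z₁ ω ∂μ)) +
          ((∫ ω, Z₂ ω ∂μ) - ∫ ω, Z₁ ω ∂μ) /
            ((M : ℝ) * (Real.exp α - 1) / (Real.exp α + (M - 1))) +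
          (∫ ω, Z₂ ω ∂μ) * (1 - ∫ ω, Z₂ ω ∂μ))) :
    (∫ ω, Z₂ ω * Real.exp α / (Z₂ ω * Real.exp α + (1 - Z₂ ω)) ∂μ) ≤
      ∫ ω, Z₁ ω * Real.exp α / (Z₁ ω * Real.exp α + (1 - Z₁ ω)) ∂μ :=
  comparison_of_two_competition_dynamics_general μ M hM α hα Z₁ Z₂ hval₁ hval₂ hL₁ hL₂ hkint₁ hkint₂
    hvar
end
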